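/- arXiv:0910.5435 — 2 statements merged into one kernel-verified Lean document; each statement's English description precedes it below -/
import Mathlib

section
/- For any nonnegative integer m and any x in (-1,1), x² P̄^m_l(x) = d_l P̄^m_l(x) + c_l P̄^m_{l+2}(x) holds for l = m and l = m+1, where c_l = sqrt((l-m+1)(l-m+2)(l+m+1)(l+m+2) / ((2l+1)(2l+3)²(2l+5))) and d_l = (2l(l+1) - 2m² - 1) / ((2l-1)(2l+3)). -/
open scoped Nat

/-- The Legendre polynomial of degree `l`, via Rodrigues' formula. -/
noncomputable def legendreP (l : ℕ) : ℝ → ℝ := fun x =>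
  (1 / (2 ^ l * (l ! : ℝ))) * iteratedDeriv l (fun y : ℝ => (y ^ 2 - 1) ^ l) x

/-- The normalized associated Legendre function `P̄_l^m`. -/
noncomputable def nalf (m l : ℕ) : ℝ → ℝ := fun x =>
  Real.sqrt ((2 * l + 1) / 2 * ((l - m)! : ℝ) / ((l + m)! : ℝ)) *
    (1 - x ^ 2) ^ ((m : ℝ) / 2) * iteratedDeriv m (legendreP l) x

/-- The spectral (l²-operator) norm of a real matrix. -/
noncomputable def specNorm {α β : Type*} [Fintype α] [Fintype β] [DecidableEq α] [DecidableEq β]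
    (A : Matrix α β ℝ) : ℝ :=
  ‖LinearMap.toContinuousLinearMap (Matrix.toEuclideanLin A)‖

/-- The singular values of a real matrix, listed in decreasing order. -/
noncomputable def singularValues {p q : ℕ} (A : Matrix (Fin p) (Fin q) ℝ) : List ℝ :=
  List.insertionSort (· ≥ ·)
    (List.ofFn fun i => Real.sqrt ((show (A.transpose * A).IsHermitian by
      simpa [Matrix.conjTranspose_eq_transpose_of_trivial] using
        Matrix.isHermitian_conjTranspose_mul_self A).eigenvalues i))

noncomputable def ccoef (m l : ℕ) : ℝ :=
  Real.sqrt ((((l : ℝ) - m + 1) * ((l : ℝ) - m + 2) * ((l : ℝ) + m + 1) * ((l : ℝ) + m + 2)) /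
    ((2 * (l : ℝ) + 1) * (2 * (l : ℝ) + 3) ^ 2 * (2 * (l : ℝ) + 5)))

noncomputable def dcoef (m l : ℕ) : ℝ :=
  (2 * (l : ℝ) * ((l : ℝ) + 1) - 2 * (m : ℝ) ^ 2 - 1) /
    ((2 * (l : ℝ) - 1) * (2 * (l : ℝ) + 3))

/-!
By Rodrigues' formula, `d^m/dx^m P_l` is `1/(2^l l!)` times the `(l+m)`-th derivative of
`(x²-1)^l`. For `l < m + 4` only the two top terms `x^{2l} - l x^{2l-2}` of the binomial expansion
survive that many differentiations, so `P_m^{(m)}, …, P_{m+3}^{(m)}` are explicit multiples of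
`(2m)!/(2^m m!)` by polynomials of degree at most three, and the two recurrences become identities
between rational functions of `m` and `x`. The normalising constants `N_l` match because
`c_l N_{l+2} = (l-m+1)(l-m+2)/((2l+1)(2l+3)) · N_l`, and `(1-x²)^{m/2}` is a common factor.
-/

open Polynomial

lemma Polynomial.iteratedDeriv_eval {𝕜 : Type*} [NontriviallyNormedField 𝕜] (p : 𝕜[X]) (n : ℕ) :
    iteratedDeriv n (fun x => p.eval x) = fun x => (derivative^[n] p).eval x := by
  induction n with
  | zero => simp
  | succ n ih =>
    rw [iteratedDeriv_succ, ih, Function.iterate_succ_apply']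
    funext x
    exact Polynomial.deriv _

lemma Nat.cast_descFactorial_eq_div {K : Type*} [Field K] [CharZero K] {n k : ℕ} (h : k ≤ n) :
    (n.descFactorial k : K) = n ! / (n - k)! := by
  rw [eq_div_iff (Nat.cast_ne_zero.mpr (Nat.factorial_ne_zero _)), mul_comm]
  exact_mod_cast Nat.factorial_mul_descFactorial h

lemma eval_iterate_derivative_X_sq_sub_one_pow {R : Type*} [CommRing R] {l n : ℕ}
    (h : 2 * l < n + 4) (x : R) :
    (derivative^[n] ((X ^ 2 - 1) ^ l : R[X])).eval x =
      (2 * l).descFactorial n * x ^ (2 * l - n) -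
        l * (2 * (l - 1)).descFactorial n * x ^ (2 * (l - 1) - n) := by
  have hexp : ((X ^ 2 - 1) ^ l : R[X]) =
      ∑ j ∈ Finset.range (l + 1), C ((-1) ^ j * (l.choose j : R)) * X ^ (2 * (l - j)) := by
    rw [sub_eq_neg_add, add_pow]
    refine Finset.sum_congr rfl fun j _ => ?_
    simp [pow_mul]
    ring
  rw [hexp, iterate_derivative_sum, eval_finsetSum, Finset.sum_eq_add 0 1 zero_ne_one]
  · simp [iterate_derivative_X_pow_eq_natCast_mul]
    ring
  · intro j hj hj01
    rw [Finset.mem_range] at hj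
    rw [iterate_derivative_C_mul, iterate_derivative_X_pow_eq_natCast_mul,
      Nat.descFactorial_of_lt (by omega)]
    simp
  · simp
  · intro h1
    simp_all

lemma iteratedDeriv_legendreP (m l : ℕ) (x : ℝ) :
    iteratedDeriv m (legendreP l) x =
      (derivative^[m + l] ((X ^ 2 - 1) ^ l : ℝ[X])).eval x / (2 ^ l * l !) := by
  have hpoly : legendreP l = fun x =>
      (C (1 / (2 ^ l * (l ! : ℝ))) * derivative^[l] ((X ^ 2 - 1) ^ l)).eval x := by
    funext y
    have h := congrFun (Polynomial.iteratedDeriv_eval ((X ^ 2 - 1) ^ l : ℝ[X]) l) y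
    simp only [eval_pow, eval_sub, eval_X, eval_one] at h
    simp [legendreP, h]
  rw [hpoly, Polynomial.iteratedDeriv_eval, iterate_derivative_C_mul, ← Function.iterate_add_apply]
  simp [div_eq_inv_mul]

lemma iteratedDeriv_legendreP_self (m : ℕ) (x : ℝ) :
    iteratedDeriv m (legendreP m) x = (2 * m)! / (2 ^ m * m !) := by
  have hlow : (m : ℝ) * (2 * (m - 1)).descFactorial (m + m) = 0 := by
    rcases m with _ | m
    · simp
    · rw [Nat.descFactorial_of_lt (by omega), Nat.cast_zero, mul_zero]
  rw [iteratedDeriv_legendreP, eval_iterate_derivative_X_sq_sub_one_pow (by omega), hlow,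
    ← two_mul, Nat.descFactorial_self]
  simp

lemma iteratedDeriv_legendreP_add_one (m : ℕ) (x : ℝ) :
    iteratedDeriv m (legendreP (m + 1)) x = (2 * m + 1) * ((2 * m)! / (2 ^ m * m !)) * x := by
  rw [iteratedDeriv_legendreP, eval_iterate_derivative_X_sq_sub_one_pow (by omega),
    Nat.descFactorial_of_lt (by omega : 2 * (m + 1 - 1) < m + (m + 1)),
    Nat.cast_descFactorial_eq_div (by omega), show 2 * (m + 1) - (m + (m + 1)) = 1 by omega,
    show 2 * (m + 1) = 2 * m + 1 + 1 by ring]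
  push_cast [Nat.factorial_succ]
  field_simp
  ring

lemma iteratedDeriv_legendreP_add_two (m : ℕ) (x : ℝ) :
    iteratedDeriv m (legendreP (m + 2)) x =
      (2 * m + 1) * ((2 * m)! / (2 ^ m * m !)) / 2 * ((2 * m + 3) * x ^ 2 - 1) := by
  rw [iteratedDeriv_legendreP, eval_iterate_derivative_X_sq_sub_one_pow (by omega),
    Nat.cast_descFactorial_eq_div (by omega), show 2 * (m + 2) - (m + (m + 2)) = 2 by omega,
    show 2 * (m + 2 - 1) = m + (m + 2) by omega, Nat.descFactorial_self, Nat.sub_self,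
    show 2 * (m + 2) = 2 * m + 3 + 1 by ring, show m + (m + 2) = 2 * m + 1 + 1 by ring]
  push_cast [Nat.factorial_succ]
  field_simp
  ring

lemma iteratedDeriv_legendreP_add_three (m : ℕ) (x : ℝ) :
    iteratedDeriv m (legendreP (m + 3)) x =
      (2 * m + 1) * (2 * m + 3) * ((2 * m)! / (2 ^ m * m !)) / 6 *
        ((2 * m + 5) * x ^ 3 - 3 * x) := by
  rw [iteratedDeriv_legendreP, eval_iterate_derivative_X_sq_sub_one_pow (by omega),
    Nat.cast_descFactorial_eq_div (by omega), Nat.cast_descFactorial_eq_div (by omega),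
    show 2 * (m + 3) - (m + (m + 3)) = 3 by omega,
    show 2 * (m + 3 - 1) - (m + (m + 3)) = 1 by omega,
    show 2 * (m + 3) = 2 * m + 5 + 1 by ring, show 2 * (m + 3 - 1) = 2 * m + 3 + 1 by omega]
  push_cast [Nat.factorial_succ]
  field_simp
  ring

lemma sq_mul_iteratedDeriv_legendreP_self (m : ℕ) (x : ℝ) :
    x ^ 2 * iteratedDeriv m (legendreP m) x =
      dcoef m m * iteratedDeriv m (legendreP m) x +
        2 / ((2 * m + 1) * (2 * m + 3)) * iteratedDeriv m (legendreP (m + 2)) x := by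
  have h2m : 2 * (m : ℝ) - 1 ≠ 0 := by
    intro h
    have : ((2 * m : ℕ) : ℝ) = 1 := by push_cast; linarith
    have : 2 * m = 1 := by exact_mod_cast this
    omega
  rw [iteratedDeriv_legendreP_self, iteratedDeriv_legendreP_add_two, dcoef]
  field_simp
  ring

lemma sq_mul_iteratedDeriv_legendreP_add_one (m : ℕ) (x : ℝ) :
    x ^ 2 * iteratedDeriv m (legendreP (m + 1)) x =
      dcoef m (m + 1) * iteratedDeriv m (legendreP (m + 1)) x +
        6 / ((2 * m + 3) * (2 * m + 5)) * iteratedDeriv m (legendreP (m + 3)) x := by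
  have h2m : 2 * ((m : ℝ) + 1) - 1 ≠ 0 := by linarith [(m.cast_nonneg : (0 : ℝ) ≤ m)]
  rw [iteratedDeriv_legendreP_add_one, iteratedDeriv_legendreP_add_three, dcoef]
  push_cast
  field_simp
  ring

noncomputable def nalfNorm (m l : ℕ) : ℝ :=
  Real.sqrt ((2 * l + 1) / 2 * ((l - m)! : ℝ) / ((l + m)! : ℝ))

lemma nalf_eq (m l : ℕ) (x : ℝ) :
    nalf m l x = nalfNorm m l * (1 - x ^ 2) ^ ((m : ℝ) / 2) * iteratedDeriv m (legendreP l) x :=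
  rfl

lemma ccoef_mul_nalfNorm {m l : ℕ} (h : m ≤ l) :
    ccoef m l * nalfNorm m (l + 2) =
      ((l : ℝ) - m + 1) * ((l : ℝ) - m + 2) / ((2 * l + 1) * (2 * l + 3)) * nalfNorm m l := by
  obtain ⟨k, rfl⟩ := Nat.exists_eq_add_of_le h
  have hsub : ((m + k : ℕ) : ℝ) - m = k := by push_cast; ring
  have hκ : (0 : ℝ) ≤ (k + 1) * (k + 2) / ((2 * ↑(m + k) + 1) * (2 * ↑(m + k) + 3)) := by
    positivity
  rw [ccoef, nalfNorm, nalfNorm, hsub, show m + k + 2 - m = k + 2 by omega,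
    Nat.add_sub_cancel_left, ← Real.sqrt_mul (by positivity), ← Real.sqrt_sq hκ,
    ← Real.sqrt_mul (by positivity), show m + k + 2 + m = m + k + m + 1 + 1 by omega]
  congr 1
  push_cast [Nat.factorial_succ]
  field_simp
  ring

lemma sq_mul_nalf_of_recurrence {m l : ℕ} {x κ : ℝ}
    (hκ : ccoef m l * nalfNorm m (l + 2) = κ * nalfNorm m l)
    (hrec : x ^ 2 * iteratedDeriv m (legendreP l) x =
      dcoef m l * iteratedDeriv m (legendreP l) x + κ * iteratedDeriv m (legendreP (l + 2)) x) :
    x ^ 2 * nalf m l x = dcoef m l * nalf m l x + ccoef m l * nalf m (l + 2) x := by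
  simp only [nalf_eq]
  linear_combination (nalfNorm m l * (1 - x ^ 2) ^ ((m : ℝ) / 2)) * hrec -
    ((1 - x ^ 2) ^ ((m : ℝ) / 2) * iteratedDeriv m (legendreP (l + 2)) x) * hκ

theorem three_term_recurrence_start_general (m : ℕ) (x : ℝ) :
    (x ^ 2 * nalf m m x = dcoef m m * nalf m m x + ccoef m m * nalf m (m + 2) x) ∧
    (x ^ 2 * nalf m (m + 1) x
      = dcoef m (m + 1) * nalf m (m + 1) x + ccoef m (m + 1) * nalf m (m + 3) x) := by
  constructor
  · refine sq_mul_nalf_of_recurrence ?_ (sq_mul_iteratedDeriv_legendreP_self m x)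
    rw [ccoef_mul_nalfNorm le_rfl]
    ring
  · refine sq_mul_nalf_of_recurrence ?_ (sq_mul_iteratedDeriv_legendreP_add_one m x)
    rw [ccoef_mul_nalfNorm m.le_succ]
    push_cast
    ring

theorem three_term_recurrence_start (m : ℕ) (x : ℝ) (hx : x ∈ Set.Ioo (-1 : ℝ) 1) :
    (x ^ 2 * nalf m m x = dcoef m m * nalf m m x + ccoef m m * nalf m (m + 2) x) ∧
    (x ^ 2 * nalf m (m + 1) x
      = dcoef m (m + 1) * nalf m (m + 1) x + ccoef m (m + 1) * nalf m (m + 3) x) :=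
  three_term_recurrence_start_general m x
end

section
/- Suppose à is a real k × n matrix (k ≤ n) such that some subset of k of its columns forms the k × k identity matrix and every entry of à has absolute value at most 2. Then the spectral norm of à is at most sqrt(4k(n-k)+1). -/
open scoped Nat

/-! If the columns `g i` form the identity, then `A x = x ∘ g + B y` where `y` is the restriction
of `x` to the remaining columns and `B` the corresponding block of `A`. Cauchy–Schwarz row by row
gives `‖B y‖² ≤ ‖B‖_F² ‖y‖²`, and AM-GM on the cross term gives
`‖x ∘ g + B y‖² ≤ (1 + ‖B‖_F²)(‖x ∘ g‖² + ‖y‖²) = (1 + ‖B‖_F²) ‖x‖²`.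
With entries bounded by `2`, `‖B‖_F² ≤ 4 k (n - k)`. -/

open Finset Function
open scoped Matrix

theorem sum_add_sq_le_of_sum_sq_le {ι : Type*} (s : Finset ι) (u b : ι → ℝ) {c v : ℝ}
    (hc : 0 ≤ c) (hv : 0 ≤ v) (hb : ∑ i ∈ s, b i ^ 2 ≤ c * v) :
    ∑ i ∈ s, (u i + b i) ^ 2 ≤ (1 + c) * (∑ i ∈ s, u i ^ 2 + v) := by
  set U := ∑ i ∈ s, u i ^ 2
  set B := ∑ i ∈ s, b i ^ 2
  set T := ∑ i ∈ s, u i * b i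
  have hU : 0 ≤ U := sum_nonneg fun i _ => sq_nonneg (u i)
  have hexpand : ∑ i ∈ s, (u i + b i) ^ 2 = U + 2 * T + B := by
    simp only [add_sq, sum_add_distrib, U, B, T, mul_sum, mul_assoc]
  have hCS : T ^ 2 ≤ U * B := sum_mul_sq_le_sq_mul_sq s u b
  -- AM-GM: `(2T)² ≤ 4 U B ≤ 4 (c U) v ≤ (c U + v)²`
  have hT : 2 * T ≤ c * U + v := by
    refine le_of_abs_le (abs_le_of_sq_le_sq ?_ (by positivity))
    nlinarith [mul_le_mul_of_nonneg_left hb hU, sq_nonneg (c * U - v)]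
  rw [hexpand]
  linarith

theorem sum_eq_sum_comp_add_sum_compl_image {m n M : Type*} [Fintype m] [Fintype n]
    [DecidableEq n] [AddCommMonoid M] {g : m → n} (hg : Injective g) (f : n → M) :
    ∑ j, f j = ∑ i, f (g i) + ∑ j ∈ (univ.image g)ᶜ, f j := by
  rw [← sum_add_sum_compl (univ.image g), sum_image fun _ _ _ _ h => hg h]

theorem sum_sq_sum_mul_le {m n : Type*} [Fintype m] (A : Matrix m n ℝ) (t : Finset n)
    (x : n → ℝ) :
    ∑ i, (∑ j ∈ t, A i j * x j) ^ 2 ≤ (∑ i, ∑ j ∈ t, A i j ^ 2) * ∑ j ∈ t, x j ^ 2 := by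
  rw [sum_mul]
  exact sum_le_sum fun i _ => sum_mul_sq_le_sq_mul_sq t (A i) x

section

variable {m n : Type*} [Fintype m] [Fintype n] [DecidableEq n]

theorem mulVec_apply_eq_add_sum_compl_image [DecidableEq m] {A : Matrix m n ℝ} {g : m → n}
    (hg : Injective g) (hA : A.submatrix id g = 1) (x : n → ℝ) (i : m) :
    (A *ᵥ x) i = x (g i) + ∑ j ∈ (univ.image g)ᶜ, A i j * x j := by
  have hAg : ∀ i', A i (g i') = (1 : Matrix m m ℝ) i i' := fun i' => by rw [← hA]; rfl
  simp [Matrix.mulVec, dotProduct, sum_eq_sum_comp_add_sum_compl_image hg, hAg,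
    Matrix.one_apply]

theorem specNorm_le_sqrt_of_sum_sq_mulVec_le [DecidableEq m] (A : Matrix m n ℝ) {M : ℝ}
    (h : ∀ x : n → ℝ, ∑ i, (A *ᵥ x) i ^ 2 ≤ M * ∑ j, x j ^ 2) : specNorm A ≤ √M := by
  refine ContinuousLinearMap.opNorm_le_bound _ (Real.sqrt_nonneg M) fun x => ?_
  rw [← Real.sqrt_sq (norm_nonneg _), ← Real.sqrt_sq (norm_nonneg x), ← Real.sqrt_mul',
    EuclideanSpace.norm_sq_eq, EuclideanSpace.norm_sq_eq]
  · refine Real.sqrt_le_sqrt ?_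
    simpa [Real.norm_eq_abs, sq_abs] using h x
  · positivity

theorem specNorm_le_sqrt_one_add_sum_sq_compl_image [DecidableEq m] {A : Matrix m n ℝ}
    {g : m → n} (hg : Injective g) (hA : A.submatrix id g = 1) :
    specNorm A ≤ √(1 + ∑ i, ∑ j ∈ (univ.image g)ᶜ, A i j ^ 2) := by
  refine specNorm_le_sqrt_of_sum_sq_mulVec_le A fun x => ?_
  simp only [mulVec_apply_eq_add_sum_compl_image hg hA x,
    sum_eq_sum_comp_add_sum_compl_image hg fun j => x j ^ 2]
  exact sum_add_sq_le_of_sum_sq_le _ _ _ (by positivity) (by positivity)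
    (sum_sq_sum_mul_le A _ x)

end

theorem interp_matrix_norm_bound_two_general (k n : ℕ)
    (At : Matrix (Fin k) (Fin n) ℝ)
    (hid : ∃ g : Fin k → Fin n, Function.Injective g ∧ At.submatrix id g = 1)
    (hent : ∀ i j, |At i j| ≤ 2) :
    specNorm At ≤ Real.sqrt ((4 * k * (n - k) + 1 : ℕ)) := by
  obtain ⟨g, hg, hA⟩ := hid
  refine (specNorm_le_sqrt_one_add_sum_sq_compl_image hg hA).trans (Real.sqrt_le_sqrt ?_)
  have hcard : #(univ.image g)ᶜ = n - k := by
    simp [card_compl, card_image_of_injective _ hg]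
  calc 1 + ∑ i, ∑ j ∈ (univ.image g)ᶜ, At i j ^ 2
      ≤ 1 + ∑ _i : Fin k, ∑ _j ∈ (univ.image g)ᶜ, (2 : ℝ) ^ 2 := by
        gcongr 1 + ?_
        exact sum_le_sum fun i _ => sum_le_sum fun j _ =>
          sq_le_sq' (abs_le.mp (hent i j)).1 (abs_le.mp (hent i j)).2
    _ = _ := by
        simp only [sum_const, hcard, card_univ, Fintype.card_fin, nsmul_eq_mul]
        push_cast
        ring

theorem interp_matrix_norm_bound_two (k n : ℕ) (hkn : k ≤ n)
    (At : Matrix (Fin k) (Fin n) ℝ)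
    (hid : ∃ g : Fin k → Fin n, Function.Injective g ∧ At.submatrix id g = 1)
    (hent : ∀ i j, |At i j| ≤ 2) :
    specNorm At ≤ Real.sqrt ((4 * k * (n - k) + 1 : ℕ)) :=
  interp_matrix_norm_bound_two_general k n At hid hent
end
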